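/- arXiv:2604.15993 — 3 statements merged into one kernel-verified Lean document; each statement's English description precedes it below -/
import Mathlib

section
/- Let θ ∈ (0, π/2], R > 0, let e ∈ ℝ^{n+1} be a unit vector, and set λ = √(R² + 2R·cos θ + 1). Then for every x ∈ ℝ^{n+1} with ‖x − λe‖ = R, writing ν = (x − λe)/R and X_e(x) = ⟨x, e⟩·x − ½(‖x‖² + 1)·e, one has R·⟨x + cos θ·ν, e⟩ − ⟨X_e(x), ν⟩ = 0. (Since every principal curvature of the sphere of radius R equals 1/R, so that F = 1/R for any normalized curvature function, this says that θ-capillary spherical caps around the e-axis are stationary solutions of the flow with normal speed ⟨x + cos θ·ν, e⟩/F − ⟨X_e, ν⟩.) -/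
open Real
open scoped RealInnerProductSpace

/-!
On the sphere `‖x - λe‖ = R` one has `‖x‖² = R² + 2λ⟪x, e⟫ - λ²`, and `λ² = R² + 2R cos θ + 1`;
substituting both makes `⟪X_e(x), x - λe⟫` a polynomial in `⟪x, e⟫`, equal to
`R ⟪R x + cos θ (x - λe), e⟫`. Dividing by `R` gives the vanishing of the speed.
-/

variable {E : Type*} [NormedAddCommGroup E] [InnerProductSpace ℝ E]

noncomputable def conformalKillingField (e x : E) : E :=
  ⟪x, e⟫ • x - ((1 : ℝ) / 2 * (‖x‖ ^ 2 + 1)) • e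

theorem inner_conformalKillingField_sub_smul {e x : E} {lam R c : ℝ} (he : ‖e‖ = 1)
    (hx : ‖x - lam • e‖ = R) (hlam : lam ^ 2 = R ^ 2 + 2 * R * c + 1) :
    ⟪conformalKillingField e x, x - lam • e⟫ = R * ⟪R • x + c • (x - lam • e), e⟫ := by
  have hee : ⟪e, e⟫ = 1 := by rw [real_inner_self_eq_norm_sq, he, one_pow]
  have hsphere : ⟪x - lam • e, x - lam • e⟫ = R ^ 2 := by rw [real_inner_self_eq_norm_sq, hx]
  simp only [conformalKillingField, ← real_inner_self_eq_norm_sq, inner_sub_left,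
    inner_sub_right, inner_add_left, inner_smul_left, inner_smul_right, real_inner_comm x e, conj_trivial, hee] at hsphere ⊢
  linear_combination (⟪x, e⟫ + lam) / 2 * hsphere + (⟪x, e⟫ - lam) / 2 * hlam

theorem capillary_speed_eq_zero {e x : E} {lam R c : ℝ} (he : ‖e‖ = 1)
    (hx : ‖x - lam • e‖ = R) (hlam : lam ^ 2 = R ^ 2 + 2 * R * c + 1) :
    R * ⟪x + c • R⁻¹ • (x - lam • e), e⟫ -
      ⟪conformalKillingField e x, R⁻¹ • (x - lam • e)⟫ = 0 := by
  rcases eq_or_ne R 0 with rfl | hR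
  · simp
  rw [inner_smul_right, inner_conformalKillingField_sub_smul he hx hlam,
    inv_mul_cancel_left₀ hR, smul_comm c R⁻¹, ← real_inner_smul_left, smul_add,
    smul_inv_smul₀ hR, sub_self]

theorem stmt_6_general (n : ℕ) (θ R : ℝ)
    (e : EuclideanSpace ℝ (Fin (n + 1))) (he : ‖e‖ = 1)
    (lam : ℝ) (hlam : lam = Real.sqrt (R ^ 2 + 2 * R * Real.cos θ + 1))
    (x : EuclideanSpace ℝ (Fin (n + 1))) (hx : ‖x - lam • e‖ = R)
    (ν : EuclideanSpace ℝ (Fin (n + 1))) (hν : ν = R⁻¹ • (x - lam • e)) :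
    R * ⟪x + Real.cos θ • ν, e⟫ -
      ⟪⟪x, e⟫ • x - ((1 : ℝ) / 2 * (‖x‖ ^ 2 + 1)) • e, ν⟫ = 0 := by
  have hrad : 0 ≤ R ^ 2 + 2 * R * cos θ + 1 := by
    nlinarith [sq_nonneg (R + cos θ), cos_sq_le_one θ]
  subst hν
  exact capillary_speed_eq_zero he hx (by rw [hlam, sq_sqrt hrad])

/-- Let `θ ∈ (0, π/2]`, `R > 0`, `e` a unit vector and
`lam = √(R² + 2R cos θ + 1)`.  For every `x` with `‖x - lam • e‖ = R`, writing
`ν = R⁻¹ • (x - lam • e)` and `X_e(x) = ⟪x, e⟫ • x - ½(‖x‖² + 1) • e`, one has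
`R·⟪x + cos θ • ν, e⟫ - ⟪X_e(x), ν⟫ = 0`: θ-capillary spherical caps around the
`e`-axis are stationary for the flow with speed `⟪x + cos θ • ν, e⟫/F - ⟪X_e, ν⟫`,
since `F = 1/R` on a sphere of radius `R`. -/
theorem stmt_6 (n : ℕ) (θ R : ℝ) (hθ₁ : 0 < θ) (hθ₂ : θ ≤ π / 2) (hR : 0 < R)
    (e : EuclideanSpace ℝ (Fin (n + 1))) (he : ‖e‖ = 1)
    (lam : ℝ) (hlam : lam = Real.sqrt (R ^ 2 + 2 * R * Real.cos θ + 1))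
    (x : EuclideanSpace ℝ (Fin (n + 1))) (hx : ‖x - lam • e‖ = R)
    (ν : EuclideanSpace ℝ (Fin (n + 1))) (hν : ν = R⁻¹ • (x - lam • e)) :
    R * ⟪x + Real.cos θ • ν, e⟫ -
      ⟪⟪x, e⟫ • x - ((1 : ℝ) / 2 * (‖x‖ ^ 2 + 1)) • e, ν⟫ = 0 :=
  stmt_6_general n θ R e he lam hlam x hx ν hν
end

section
/- For n ≥ 1 and 1 ≤ k ≤ n, the Garding cone Γ_k = {κ ∈ ℝⁿ : H₁(κ) > 0, H₂(κ) > 0, …, H_k(κ) > 0} is an open convex cone: it is open, convex, closed under multiplication by positive scalars, invariant under permutations of the coordinates, and contains the positive cone (0, ∞)ⁿ. -/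
/-!
Gårding's theory of hyperbolic polynomials, for `σ_k = esymm k`. By Taylor's formula,
`t ↦ σ_k(u + t𝟙)` is a Hasse derivative of `∏ (t + u i)`, hence real-rooted by Rolle, and for
`x ∈ Γ_k` all its coefficients are positive. Deforming complex roots, which can never cross the
real axis, shows that `t ↦ σ_k(u + t x)` is real-rooted for every real `u` and every `x ∈ Γ_k`.
Convexity follows: for `x, y ∈ Γ_k`, a connectedness argument forces all coefficients of
`t ↦ σ_k(y + t x)` to be positive, so `σ_k(y + t x) > 0` for `t ≥ 0`.
-/

/-- Normalized `j`-th elementary symmetric polynomial `H_j` of `κ ∈ ℝⁿ`,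
`H_j(κ) = (n choose j)⁻¹ · Σ_{i₁<⋯<i_j} κ_{i₁}⋯κ_{i_j}`, with `H₀ = 1`. -/
noncomputable def Hsym (n j : ℕ) (κ : Fin n → ℝ) : ℝ :=
  ((n.choose j : ℝ))⁻¹ *
    ∑ s ∈ Finset.powersetCard j (Finset.univ : Finset (Fin n)), ∏ i ∈ s, κ i

/-- The Garding cone `Γ_k = {κ ∈ ℝⁿ : H₁(κ) > 0, …, H_k(κ) > 0}`. -/
def GardingCone (n k : ℕ) : Set (Fin n → ℝ) :=
  {κ | ∀ j, 1 ≤ j → j ≤ k → 0 < Hsym n j κ}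

open Polynomial Finset Topology

namespace Garding

variable {ι R : Type*} [Fintype ι]

section esymm

variable [CommSemiring R]

def esymm (k : ℕ) (v : ι → R) : R :=
  ∑ s ∈ powersetCard k univ, ∏ i ∈ s, v i

@[simp]
lemma esymm_zero (v : ι → R) : esymm 0 v = 1 := by
  simp [esymm]

lemma map_esymm {S : Type*} [CommSemiring S] (f : R →+* S) (k : ℕ) (v : ι → R) :
    f (esymm k v) = esymm k (fun i => f (v i)) := by
  simp [esymm, map_sum, map_prod]

lemma esymm_smul (k : ℕ) (c : R) (v : ι → R) : esymm k (c • v) = c ^ k * esymm k v := by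
  rw [esymm, esymm, mul_sum]
  refine sum_congr rfl fun s hs => ?_
  simp only [Pi.smul_apply, smul_eq_mul, prod_mul_distrib, prod_const,
    (mem_powersetCard.mp hs).2]

lemma esymm_const (k : ℕ) (c : R) :
    esymm k (fun _ : ι => c) = (Fintype.card ι).choose k * c ^ k := by
  rw [esymm, sum_congr rfl fun s hs => by rw [prod_const, (mem_powersetCard.mp hs).2]]
  simp [nsmul_eq_mul]

lemma esymm_comp_perm (k : ℕ) (v : ι → R) (σ : Equiv.Perm ι) : esymm k (v ∘ σ) = esymm k v := by
  simp only [esymm, ← esymm_map_val, ← Multiset.map_map, Multiset.map_univ_val_equiv]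

lemma continuous_esymm [TopologicalSpace R] [IsTopologicalSemiring R] (k : ℕ) :
    Continuous (esymm k : (ι → R) → R) := by
  unfold esymm
  fun_prop

variable [PartialOrder R]

lemma esymm_pos [IsStrictOrderedRing R] {k : ℕ} (hk : k ≤ Fintype.card ι) {v : ι → R}
    (hv : ∀ i, 0 < v i) : 0 < esymm k v :=
  sum_pos (fun s _ => prod_pos fun i _ => hv i) (powersetCard_nonempty.mpr (by simpa using hk))

/-- The Gårding cone `Γ_k`, for an arbitrary index type. -/
def cone (k : ℕ) : Set (ι → R) := {κ | ∀ j ≤ k, 0 < esymm j κ}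

lemma cone_subset_cone {j k : ℕ} (h : j ≤ k) : (cone k : Set (ι → R)) ⊆ cone j :=
  fun _ hκ i hi => hκ i (hi.trans h)

end esymm

lemma eval_pos_of_coeff_nonneg [CommSemiring R] [PartialOrder R] [IsStrictOrderedRing R]
    {p : R[X]} (h0 : 0 < p.coeff 0) (h : ∀ i ≤ p.natDegree, 0 ≤ p.coeff i) {t : R}
    (ht : 0 ≤ t) : 0 < p.eval t := by
  rw [eval_eq_sum_range]
  exact sum_pos' (fun i hi => mul_nonneg (h i (Nat.lt_succ_iff.mp (mem_range.mp hi)))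
    (pow_nonneg ht i)) ⟨0, mem_range.mpr (Nat.succ_pos _), by simpa using h0⟩

lemma coeff_pos_of_roots_neg {p : ℝ[X]} (hp : p.Splits) (hlc : 0 < p.leadingCoeff)
    (hroots : ∀ r ∈ p.roots, r < 0) {j : ℕ} (hj : j ≤ p.natDegree) : 0 < p.coeff j := by
  set M := p.roots.map Neg.neg
  have hprod : (p.roots.map fun r => X - C r) = M.map fun a => X + C a := by
    simp [M, Multiset.map_map, sub_eq_add_neg]
  have hcard : j ≤ Multiset.card M := by simpa [M, ← hp.natDegree_eq_card_roots] using hj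
  rw [hp.eq_prod_roots, coeff_C_mul, hprod, Multiset.prod_X_add_C_coeff _ hcard,
    ← Multiset.map_univ_coe M, esymm_map_val]
  refine mul_pos hlc (esymm_pos (v := fun a : M => (a : ℝ)) (by simp) fun a => ?_)
  obtain ⟨r, hr, hra⟩ := Multiset.mem_map.mp (Multiset.coe_mem (x := a))
  simpa [← hra] using hroots r hr

lemma splits_derivative {p : ℝ[X]} (hp : p.Splits) : (derivative p).Splits := by
  rw [splits_iff_card_roots] at hp ⊢
  have := card_roots_le_derivative p
  have := card_roots' (derivative p)
  have := natDegree_derivative_le p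
  omega

lemma splits_iterate_derivative {p : ℝ[X]} (hp : p.Splits) (m : ℕ) :
    (derivative^[m] p).Splits := by
  induction m with
  | zero => exact hp
  | succ m ih =>
    rw [Function.iterate_succ_apply']
    exact splits_derivative ih


section shift

variable [CommSemiring R]

noncomputable def shiftPoly (k : ℕ) (u : ι → R) : R[X] :=
  hasseDeriv (Fintype.card ι - k) (∏ i, (X + C (u i)))

lemma coeff_prod_X_add_C {k : ℕ} (hk : k ≤ Fintype.card ι) (u : ι → R) :
    (∏ i, (X + C (u i))).coeff (Fintype.card ι - k) = esymm k u := by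
  rw [prod_X_add_C_coeff _ _ (by simp), card_univ, Nat.sub_sub_self hk, esymm]

lemma eval_shiftPoly {k : ℕ} (hk : k ≤ Fintype.card ι) (u : ι → R) (t : R) :
    (shiftPoly k u).eval t = esymm k (fun i => u i + t) := by
  have htaylor : taylor t (∏ i, (X + C (u i))) = ∏ i, (X + C (u i + t)) := by
    rw [taylor_apply, Polynomial.prod_comp]
    refine prod_congr rfl fun i _ => ?_
    simp only [add_comp, X_comp, C_comp, C_add]
    ring
  rw [shiftPoly, ← taylor_coeff, htaylor, coeff_prod_X_add_C hk]

lemma coeff_shiftPoly {k i : ℕ} (hk : k ≤ Fintype.card ι) (hi : i ≤ k) (u : ι → R) :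
    (shiftPoly k u).coeff i =
      (i + (Fintype.card ι - k)).choose (Fintype.card ι - k) * esymm (k - i) u := by
  rw [shiftPoly, hasseDeriv_coeff,
    show i + (Fintype.card ι - k) = Fintype.card ι - (k - i) by omega,
    coeff_prod_X_add_C (by omega)]

lemma coeff_shiftPoly_of_lt {k i : ℕ} (hik : k < i) (u : ι → R) : (shiftPoly k u).coeff i = 0 := by
  have hdeg : (∏ i, (X + C (u i))).natDegree ≤ Fintype.card ι :=
    (natDegree_prod_le _ _).trans <| (sum_le_card_nsmul _ _ 1 fun i _ =>
      natDegree_add_C.le.trans natDegree_X_le).trans (by simp)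
  rw [shiftPoly, hasseDeriv_coeff, coeff_eq_zero_of_natDegree_lt (by omega), mul_zero]

lemma shiftPoly_ne_zero [CharZero R] {k : ℕ} (hk : k ≤ Fintype.card ι) (u : ι → R) :
    shiftPoly k u ≠ 0 := by
  intro h
  have := coeff_shiftPoly hk le_rfl u
  rw [h, coeff_zero, Nat.sub_self, esymm_zero, mul_one] at this
  exact Nat.cast_ne_zero.mpr (Nat.choose_pos (by omega)).ne' this.symm

lemma map_shiftPoly {S : Type*} [CommSemiring S] (f : R →+* S) (k : ℕ) (u : ι → R) :
    (shiftPoly k u).map f = shiftPoly k (fun i => f (u i)) := by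
  ext i
  simp only [shiftPoly, coeff_map, hasseDeriv_coeff, map_mul, map_natCast]
  rw [← coeff_map, Polynomial.map_prod]
  simp

lemma esymm_add_const_pos [PartialOrder R] [IsStrictOrderedRing R] {k : ℕ}
    (hk : k ≤ Fintype.card ι) {x : ι → R} (hx : x ∈ cone k) {t : R} (ht : 0 ≤ t) :
    0 < esymm k (fun i => x i + t) := by
  rw [← eval_shiftPoly hk]
  refine eval_pos_of_coeff_nonneg ?_ (fun i _ => ?_) ht
  · rw [coeff_shiftPoly hk (Nat.zero_le k)]
    exact mul_pos (by exact_mod_cast Nat.choose_pos (by omega)) (hx k le_rfl)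
  · rcases le_or_gt i k with hik | hik
    · rw [coeff_shiftPoly hk hik]
      exact mul_nonneg (Nat.cast_nonneg _) (hx _ (Nat.sub_le k i)).le
    · rw [coeff_shiftPoly_of_lt hik]

end shift

lemma splits_shiftPoly {k : ℕ} (hk : k ≤ Fintype.card ι) (u : ι → ℝ) :
    (shiftPoly k u).Splits := by
  set m := Fintype.card ι - k
  have hP : (∏ i, (X + C (u i))).Splits := Splits.prod fun i _ => Splits.X_add_C _
  have hfac : derivative^[m] (∏ i, (X + C (u i))) = C (m.factorial : ℝ) * shiftPoly k u := by
    rw [← factorial_smul_hasseDeriv]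
    simp [shiftPoly, m, nsmul_eq_mul]
  refine (splits_iterate_derivative hP m).of_dvd ?_ (hfac ▸ dvd_mul_left _ _)
  rw [hfac]
  exact mul_ne_zero (by simpa using m.factorial_ne_zero) (shiftPoly_ne_zero hk u)

lemma esymm_ofReal_add_ne_zero {k : ℕ} (hk : k ≤ Fintype.card ι) (u : ι → ℝ) {τ : ℂ}
    (hτ : τ.im ≠ 0) : esymm k (fun i => (u i : ℂ) + τ) ≠ 0 := by
  rw [← eval_shiftPoly hk]
  intro hroot
  obtain ⟨r, rfl⟩ := (splits_shiftPoly hk u).mem_range_of_isRoot (shiftPoly_ne_zero hk u)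
    (i := algebraMap ℝ ℂ) (by rwa [IsRoot, map_shiftPoly])
  simp at hτ

lemma continuous_coeff_prod {α X : Type*} [CommSemiring R] [TopologicalSpace R]
    [IsTopologicalSemiring R] [TopologicalSpace X] {F : α → X → R[X]} (s : Finset α)
    (hF : ∀ a ∈ s, ∀ j, Continuous fun x => (F a x).coeff j) (j : ℕ) :
    Continuous fun x => (∏ a ∈ s, F a x).coeff j := by
  induction s using Finset.cons_induction generalizing j with
  | empty =>
    simp only [prod_empty]
    fun_prop
  | cons a s ha ih =>
    simp only [prod_cons, coeff_mul]
    exact continuous_finsetSum _ fun p _ => (hF a (mem_cons_self a s) _).mul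
      (ih (fun b hb => hF b (mem_cons_of_mem hb)) _)

section dirPoly

variable [CommSemiring R]

noncomputable def dirPoly (k : ℕ) (u x : ι → R) : R[X] :=
  esymm k (fun i => C (u i) + C (x i) * X)

lemma eval_dirPoly (k : ℕ) (u x : ι → R) (t : R) :
    (dirPoly k u x).eval t = esymm k (fun i => u i + x i * t) := by
  rw [dirPoly, ← coe_evalRingHom, map_esymm]
  simp

lemma map_dirPoly {S : Type*} [CommSemiring S] (f : R →+* S) (k : ℕ) (u x : ι → R) :
    (dirPoly k u x).map f = dirPoly k (fun i => f (u i)) (fun i => f (x i)) := by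
  rw [dirPoly, ← coe_mapRingHom, map_esymm]
  simp [dirPoly]

lemma coeff_zero_dirPoly (k : ℕ) (u x : ι → R) : (dirPoly k u x).coeff 0 = esymm k u := by
  simp [coeff_zero_eq_eval_zero, eval_dirPoly]

lemma natDegree_C_add_C_mul_X_le (a b : R) : (C a + C b * X).natDegree ≤ 1 :=
  natDegree_C_add.le.trans ((natDegree_C_mul_le _ _).trans natDegree_X_le)

lemma natDegree_dirPoly_le (k : ℕ) (u x : ι → R) : (dirPoly k u x).natDegree ≤ k := by
  refine natDegree_sum_le_of_forall_le _ _ fun s hs => (natDegree_prod_le _ _).trans ?_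
  exact (sum_le_card_nsmul _ _ 1 fun i _ => natDegree_C_add_C_mul_X_le _ _).trans
    (by simp [(mem_powersetCard.mp hs).2])

lemma coeff_dirPoly_self (k : ℕ) (u x : ι → R) : (dirPoly k u x).coeff k = esymm k x := by
  rw [dirPoly, esymm, finsetSum_coeff, esymm]
  refine sum_congr rfl fun s hs => ?_
  simpa [(mem_powersetCard.mp hs).2] using coeff_prod_of_natDegree_le s
    (fun i => C (u i) + C (x i) * X) 1 fun i _ => natDegree_C_add_C_mul_X_le _ _

lemma natDegree_dirPoly {k : ℕ} {u x : ι → R} (hx : esymm k x ≠ 0) :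
    (dirPoly k u x).natDegree = k :=
  (natDegree_dirPoly_le k u x).antisymm (le_natDegree_of_ne_zero (by rwa [coeff_dirPoly_self]))

lemma dirPoly_self (k : ℕ) (x : ι → R) : dirPoly k x x = C (esymm k x) * (X + 1) ^ k := by
  have : (fun i => C (x i) + C (x i) * X) = (X + 1 : R[X]) • fun i => C (x i) := by
    ext1 i
    simp only [Pi.smul_apply, smul_eq_mul]
    ring
  rw [dirPoly, this, esymm_smul, map_esymm, mul_comm]

lemma continuous_coeff_dirPoly [TopologicalSpace R] [IsTopologicalSemiring R] (k j : ℕ)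
    (x : ι → R) : Continuous fun u => (dirPoly k u x).coeff j := by
  simp only [dirPoly, esymm, finsetSum_coeff]
  refine continuous_finsetSum _ fun s _ => continuous_coeff_prod s (fun i _ j => ?_) j
  simp only [coeff_add, coeff_C, coeff_C_mul_X]
  split_ifs <;> fun_prop

end dirPoly

lemma norm_leadingCoeff_mul_pow_le_norm_eval {p : ℂ[X]} {z : ℂ} {δ : ℝ} (hδ : 0 ≤ δ)
    (h : ∀ w ∈ p.roots, δ ≤ ‖z - w‖) : ‖p.leadingCoeff‖ * δ ^ p.natDegree ≤ ‖p.eval z‖ := by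
  have hp := IsAlgClosed.splits p
  have hnorm : ‖(p.roots.map fun w => z - w).prod‖ = (p.roots.map fun w => ‖z - w‖).prod := by
    simpa [Multiset.map_map] using map_multiset_prod (normHom : ℂ →*₀ ℝ) (p.roots.map (z - ·))
  rw [hp.eval_eq_prod_roots, norm_mul, hnorm, hp.natDegree_eq_card_roots]
  gcongr
  simpa using Multiset.prod_map_le_prod_map₀ (fun _ => δ) _ (fun _ _ => hδ) h

lemma norm_lt_of_isRoot {p : ℂ[X]} (hp : p ≠ 0) {z : ℂ} (hz : p.IsRoot z) :
    ‖z‖ < (∑ j ∈ range p.natDegree, ‖p.coeff j‖) / ‖p.leadingCoeff‖ + 1 := by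
  have h : ‖z‖₊ < (∑ j ∈ range p.natDegree, ‖p.coeff j‖₊) / ‖p.leadingCoeff‖₊ + 1 := by
    refine (hz.norm_lt_cauchyBound hp).trans_le ?_
    rw [cauchyBound]
    gcongr
    exact Finset.sup_le fun j hj => single_le_sum (f := (‖p.coeff ·‖₊)) (fun _ _ => zero_le) hj
  have := NNReal.coe_lt_coe.mpr h
  push_cast at this
  exact this

lemma roots_im_nonpos_iff {p : ℂ[X]} {k : ℕ} (hdeg : p.natDegree ≤ k) (hk : p.coeff k ≠ 0) :
    (∀ z ∈ p.roots, z.im ≤ 0) ↔ ∀ z : ℂ, 0 < z.im → ‖p.coeff k‖ * z.im ^ k ≤ ‖p.eval z‖ := by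
  have hdeg' : p.natDegree = k := hdeg.antisymm (le_natDegree_of_ne_zero hk)
  constructor
  · intro h z hz
    rw [← hdeg', ← leadingCoeff]
    refine norm_leadingCoeff_mul_pow_le_norm_eval hz.le fun w hw => ?_
    calc z.im ≤ (z - w).im := by simp; linarith [h w hw]
      _ ≤ ‖z - w‖ := (le_abs_self _).trans (Complex.abs_im_le_norm _)
  · intro h z hz
    by_contra! him
    have := h z him
    rw [(mem_roots'.mp hz).2, norm_zero] at this
    exact this.not_gt (by have := norm_pos_iff.mpr hk; positivity)

section family

variable {X : Type*} [TopologicalSpace X] {F : X → ℂ[X]} {k : ℕ} {A : ℂ}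

lemma continuous_eval_of_continuous_coeff (hdeg : ∀ s, (F s).natDegree ≤ k)
    (hF : ∀ j, Continuous fun s => (F s).coeff j) :
    Continuous fun q : X × ℂ => (F q.1).eval q.2 := by
  simp_rw [fun q : X × ℂ => eval_eq_sum_range' (Nat.lt_succ_of_le (hdeg q.1)) q.2]
  exact continuous_finsetSum _ fun j _ => ((hF j).comp continuous_fst).mul (continuous_snd.pow j)

lemma isClosed_setOf_roots_im_nonpos (hA : A ≠ 0) (hdeg : ∀ s, (F s).natDegree ≤ k)
    (hlead : ∀ s, (F s).coeff k = A) (hF : ∀ j, Continuous fun s => (F s).coeff j) :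
    IsClosed {s | ∀ z ∈ (F s).roots, z.im ≤ 0} := by
  simp_rw [roots_im_nonpos_iff (hdeg _) (hlead _ ▸ hA), hlead, Set.ofPred_forall]
  refine isClosed_iInter fun z => isClosed_iInter fun _ => isClosed_le continuous_const ?_
  exact ((continuous_eval_of_continuous_coeff hdeg hF).comp (Continuous.prodMk_left z)).norm

lemma isOpen_setOf_roots_im_neg (hA : A ≠ 0) (hdeg : ∀ s, (F s).natDegree ≤ k)
    (hlead : ∀ s, (F s).coeff k = A) (hF : ∀ j, Continuous fun s => (F s).coeff j) :
    IsOpen {s | ∀ z ∈ (F s).roots, z.im < 0} := by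
  -- Near `s₀` the roots of `F s` stay in a fixed ball (Cauchy's bound), and on the compact part
  -- of the closed upper half-plane inside it `F s₀`, hence also `F s`, does not vanish.
  have hne : ∀ s, F s ≠ 0 := fun s h => hA (by rw [← hlead s, h, coeff_zero])
  set B : X → ℝ := fun s => (∑ j ∈ range k, ‖(F s).coeff j‖) / ‖A‖ + 1
  have hB : ∀ s, ∀ z ∈ (F s).roots, ‖z‖ < B s := fun s z hz => by
    have hdeg' : (F s).natDegree = k := (hdeg s).antisymm (le_natDegree_of_ne_zero (hlead s ▸ hA))
    simpa [B, leadingCoeff, hdeg', hlead] using norm_lt_of_isRoot (hne s) (mem_roots'.mp hz).2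
  have hBcont : Continuous B :=
    ((continuous_finsetSum _ fun j _ => (hF j).norm).div_const _).add continuous_const
  rw [isOpen_iff_eventually]
  intro s₀ hs₀
  set K := Metric.closedBall (0 : ℂ) (B s₀ + 1) ∩ {z | 0 ≤ z.im}
  have hK : IsCompact K :=
    (isCompact_closedBall _ _).inter_right (isClosed_le continuous_const Complex.continuous_im)
  have hnz : ∀ᶠ s in 𝓝 s₀, ∀ z ∈ K, (F s).eval z ≠ 0 := by
    refine hK.eventually_forall_of_forall_eventually fun z hz => ?_
    refine (continuous_eval_of_continuous_coeff hdeg hF).continuousAt.eventually_ne fun h => ?_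
    exact (hs₀ z (mem_roots'.mpr ⟨hne s₀, h⟩)).not_ge hz.2
  filter_upwards [hBcont.continuousAt.eventually_lt continuousAt_const (lt_add_one (B s₀)), hnz]
    with s hsB hsK z hz
  by_contra! him
  refine hsK z ⟨?_, him⟩ (mem_roots'.mp hz).2
  exact mem_closedBall_zero_iff.mpr ((hB s z hz).trans hsB).le

end family

lemma splits_of_roots_im_nonpos {p : ℝ[X]}
    (h : ∀ z ∈ (p.map (algebraMap ℝ ℂ)).roots, z.im ≤ 0) : p.Splits := by
  refine (IsAlgClosed.splits _).of_splits_map (algebraMap ℝ ℂ) fun z hz => ?_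
  have hz' := mem_roots'.mp hz
  have hconj : (starRingEnd ℂ) z ∈ (p.map (algebraMap ℝ ℂ)).roots := by
    rw [mem_roots', IsRoot, eval_map_algebraMap, aeval_conj, ← eval_map_algebraMap, hz'.2,
      map_zero]
    exact ⟨hz'.1, rfl⟩
  refine ⟨z.re, Complex.ext (by simp) ?_⟩
  have := h _ hconj
  rw [Complex.conj_im] at this
  simp only [Complex.coe_algebraMap, Complex.ofReal_im]
  linarith [h z hz]

lemma ofReal_esymm (k : ℕ) (x : ι → ℝ) : ((esymm k x : ℝ) : ℂ) = esymm k (fun i => (x i : ℂ)) :=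
  map_esymm Complex.ofRealHom k x

section hyperbolic

variable {k : ℕ} {x : ι → ℝ}

lemma im_neg_of_esymm_I_add_eq_zero (hk : k ≤ Fintype.card ι) (hx : x ∈ cone k)
    {z : ℂ} (hz : esymm k (fun i => Complex.I + z * x i) = 0) : z.im < 0 := by
  -- `σ_k(i𝟙 + z x) = z ^ k σ_k(x + (i / z)𝟙)`, and `t ↦ σ_k(x + t𝟙)` has only negative real roots.
  have hz0 : z ≠ 0 := by
    rintro rfl
    simp [esymm_const, Complex.I_ne_zero, (Nat.choose_pos hk).ne'] at hz
  have hscale : (fun i => Complex.I + z * x i) = z • fun i => (x i : ℂ) + Complex.I / z := by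
    ext i
    simp [field, add_comm]
  rw [hscale, esymm_smul, mul_eq_zero, or_iff_right (pow_ne_zero _ hz0)] at hz
  obtain ⟨r, hr⟩ : ∃ r : ℝ, Complex.I / z = r := by
    refine ⟨_, Complex.ext rfl ?_⟩
    by_contra h
    exact esymm_ofReal_add_ne_zero hk x (by simpa using h) hz
  have hr0 : r < 0 := by
    by_contra! hr0
    have := ofReal_esymm k (fun i => x i + r)
    push_cast at this
    rw [← hr, hz, Complex.ofReal_eq_zero] at this
    exact (esymm_add_const_pos hk hx hr0).ne' this
  rw [show z = Complex.I / r by rw [← hr]; field_simp]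
  simpa using hr0

/-- Gårding's hyperbolicity theorem for `esymm k`: `x ∈ Γ_k` is a direction of hyperbolicity. -/
theorem splits_dirPoly (hk : k ≤ Fintype.card ι) (hx : x ∈ cone k) (u : ι → ℝ) :
    (dirPoly k u x).Splits := by
  -- Deform `u` into `i𝟙` along `(1 - s) u + s i𝟙`. For `s ≠ 0` no root is real, and for
  -- `s = 1` all roots lie in the open lower half-plane; so they stay there for `s ∈ (0, 1]`
  -- and lie in the closed lower half-plane at `s = 0`, where they come in conjugate pairs.
  set F : ℝ → ℂ[X] := fun s =>
    dirPoly k (fun i => (1 - s) * (u i : ℂ) + s * Complex.I) (fun i => (x i : ℂ))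
  have hA : esymm k (fun i => (x i : ℂ)) ≠ 0 := by
    rw [← ofReal_esymm]
    exact Complex.ofReal_ne_zero.mpr (hx k le_rfl).ne'
  have hdeg : ∀ s, (F s).natDegree ≤ k := fun s => natDegree_dirPoly_le k _ _
  have hlead : ∀ s, (F s).coeff k = esymm k (fun i => (x i : ℂ)) :=
    fun s => coeff_dirPoly_self k _ _
  have hF : ∀ j, Continuous fun s => (F s).coeff j := fun j =>
    (continuous_coeff_dirPoly k j _).comp (by fun_prop)
  have hreal : ∀ s ≠ 0, ∀ z ∈ (F s).roots, z.im ≠ 0 := by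
    intro s hs z hz hzim
    obtain ⟨r, rfl⟩ : ∃ r : ℝ, z = r := ⟨z.re, Complex.ext (by simp) (by simp [hzim])⟩
    have hval : (F s).eval (r : ℂ) =
        esymm k (fun i => (((1 - s) * u i + x i * r : ℝ) : ℂ) + s * Complex.I) := by
      rw [eval_dirPoly]
      congr 1
      ext i
      push_cast
      ring
    refine esymm_ofReal_add_ne_zero hk (fun i => (1 - s) * u i + x i * r) (τ := s * Complex.I)
      (by simpa using hs) ?_
    rw [← hval]
    exact (mem_roots'.mp hz).2
  have hone : ∀ z ∈ (F 1).roots, z.im < 0 := by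
    intro z hz
    refine im_neg_of_esymm_I_add_eq_zero hk hx ?_
    rw [← (mem_roots'.mp hz).2, eval_dirPoly]
    simp [mul_comm]
  have hclosed := isClosed_setOf_roots_im_nonpos hA hdeg hlead hF
  have hIoc : Set.Ioc (0 : ℝ) 1 ⊆ {s | ∀ z ∈ (F s).roots, z.im < 0} := by
    refine isPreconnected_Ioc.subset_of_closure_inter_subset
      (isOpen_setOf_roots_im_neg hA hdeg hlead hF) ⟨1, ⟨one_pos, le_rfl⟩, hone⟩ ?_
    rintro s ⟨hs, hsI⟩ z hz
    exact ((closure_minimal (fun s hs z hz => (hs z hz).le) hclosed) hs z hz).lt_of_ne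
      (hreal s hsI.1.ne' z hz)
  have hF0 : F 0 = (dirPoly k u x).map (algebraMap ℝ ℂ) := by
    simp [F, map_dirPoly]
  refine splits_of_roots_im_nonpos (hF0 ▸ ?_)
  refine closure_minimal (hIoc.trans fun s hs z hz => (hs z hz).le) hclosed ?_
  rw [closure_Ioc zero_ne_one]
  exact ⟨le_rfl, zero_le_one⟩

end hyperbolic

section convexity

def rayCone (k : ℕ) : Set (ι → ℝ) := {w | ∀ t : ℝ, 0 ≤ t → 0 < esymm k (fun i => w i + t)}

variable {k : ℕ}

lemma mem_rayCone (hk : k ≤ Fintype.card ι) {x : ι → ℝ} (hx : x ∈ cone k) : x ∈ rayCone k :=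
  fun _ ht => esymm_add_const_pos hk hx ht

lemma one_mem_rayCone (hk : k ≤ Fintype.card ι) : (1 : ι → ℝ) ∈ rayCone k :=
  mem_rayCone hk fun _ hj => esymm_pos (hj.trans hk) fun _ => one_pos

lemma starConvex_rayCone (hk : k ≤ Fintype.card ι) : StarConvex ℝ 1 (rayCone (ι := ι) k) := by
  intro w hw a b ha hb hab t ht
  rcases hb.eq_or_lt with rfl | hb
  · obtain rfl : a = 1 := by linarith
    simpa using one_mem_rayCone hk t ht
  · have : (fun i => (a • (1 : ι → ℝ) + b • w) i + t) = b • fun i => w i + (a + t) / b := by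
      ext i
      simp [field]
      ring
    rw [this, esymm_smul]
    exact mul_pos (pow_pos hb k) (hw _ (by positivity))

lemma isOpen_setOf_forall_le_pos {X : Type*} [TopologicalSpace X] {f : ℕ → X → ℝ}
    (hf : ∀ j, Continuous (f j)) (k : ℕ) : IsOpen {w | ∀ j ≤ k, 0 < f j w} := by
  have : {w | ∀ j ≤ k, 0 < f j w} = ⋂ j ∈ Set.Iic k, {w | 0 < f j w} := by ext; simp
  rw [this]
  exact (Set.finite_Iic k).isOpen_biInter fun j _ => isOpen_lt continuous_const (hf j)

theorem esymm_add_mul_pos (hk : k ≤ Fintype.card ι) {x y : ι → ℝ} (hx : x ∈ cone k)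
    (hy : y ∈ cone k) {s : ℝ} (hs : 0 ≤ s) : 0 < esymm k (fun i => y i + x i * s) := by
  -- Positivity of all coefficients of `dirPoly k w x` holds at `w = x`, is open in `w`, and is
  -- closed within the connected set `rayCone k`: a real-rooted polynomial with nonnegative
  -- coefficients and positive constant term has only negative roots.
  have hdeg : ∀ w, (dirPoly k w x).natDegree = k := fun w => natDegree_dirPoly (hx k le_rfl).ne'
  set P := {w : ι → ℝ | ∀ j ≤ k, 0 < (dirPoly k w x).coeff j}
  have hxP : x ∈ P := fun j hj => by
    rw [dirPoly_self, coeff_C_mul, coeff_X_add_one_pow]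
    exact mul_pos (hx k le_rfl) (by exact_mod_cast Nat.choose_pos hj)
  have hsub : rayCone k ⊆ P := by
    refine ((starConvex_rayCone hk).isPathConnected (one_mem_rayCone hk)).isConnected.isPreconnected
      |>.subset_of_closure_inter_subset
        (isOpen_setOf_forall_le_pos (fun j => continuous_coeff_dirPoly k j x) k)
        ⟨x, mem_rayCone hk hx, hxP⟩ ?_
    rintro w ⟨hwP, hw⟩ j hj
    have hnn : ∀ j ≤ (dirPoly k w x).natDegree, 0 ≤ (dirPoly k w x).coeff j := by
      intro j hjk
      rw [hdeg] at hjk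
      refine closure_minimal (s := P) (fun w hw => (hw j hjk).le) ?_ hwP
      exact isClosed_le continuous_const (continuous_coeff_dirPoly k j x)
    have h0 : 0 < (dirPoly k w x).coeff 0 := by simpa [coeff_zero_dirPoly] using hw 0 le_rfl
    refine coeff_pos_of_roots_neg (splits_dirPoly hk hx w) ?_ (fun r hr => ?_) (by rwa [hdeg])
    · rw [leadingCoeff, hdeg, coeff_dirPoly_self]
      exact hx k le_rfl
    · by_contra! hr0
      exact (eval_pos_of_coeff_nonneg h0 hnn hr0).ne' (mem_roots'.mp hr).2
  have hyP := hsub (mem_rayCone hk hy)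
  rw [← eval_dirPoly]
  exact eval_pos_of_coeff_nonneg (hyP 0 (Nat.zero_le k)) (fun j hj => (hyP j (hdeg y ▸ hj)).le) hs

end convexity

section cone

variable {k : ℕ}

lemma isOpen_cone : IsOpen (cone k : Set (ι → ℝ)) :=
  isOpen_setOf_forall_le_pos (fun j => continuous_esymm j) k

lemma convex_cone (hk : k ≤ Fintype.card ι) : Convex ℝ (cone k : Set (ι → ℝ)) := by
  intro x hx y hy a b ha hb hab j hj
  have hxj := cone_subset_cone hj hx
  have hyj := cone_subset_cone hj hy
  have hjn := hj.trans hk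
  rcases hb.eq_or_lt with rfl | hb
  · obtain rfl : a = 1 := by linarith
    simpa using hxj j le_rfl
  · have : a • x + b • y = b • fun i => y i + x i * (a / b) := by
      ext i
      simp [field]
      ring
    rw [this, esymm_smul]
    exact mul_pos (pow_pos hb j) (esymm_add_mul_pos hjn hxj hyj (by positivity))

lemma smul_mem_cone {κ : ι → ℝ} (hκ : κ ∈ cone k) {c : ℝ} (hc : 0 < c) : c • κ ∈ cone k :=
  fun j hj => by
    rw [esymm_smul]
    exact mul_pos (pow_pos hc j) (hκ j hj)

lemma comp_perm_mem_cone {κ : ι → ℝ} (hκ : κ ∈ cone k) (σ : Equiv.Perm ι) : κ ∘ σ ∈ cone k :=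
  fun j hj => by
    rw [esymm_comp_perm]
    exact hκ j hj

lemma mem_cone_of_pos (hk : k ≤ Fintype.card ι) {κ : ι → ℝ} (hκ : ∀ i, 0 < κ i) : κ ∈ cone k :=
  fun _ hj => esymm_pos (hj.trans hk) hκ

end cone

end Garding

open Garding in
lemma gardingCone_eq_cone {n k : ℕ} (hkn : k ≤ n) : GardingCone n k = cone k := by
  ext κ
  have hHsym : ∀ j ≤ k, 0 < Hsym n j κ ↔ 0 < esymm j κ := fun j hj =>
    mul_pos_iff_of_pos_left (inv_pos.mpr (Nat.cast_pos.mpr (Nat.choose_pos (hj.trans hkn))))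
  refine ⟨fun h j hj => ?_, fun h j hj1 hjk => (hHsym j hjk).mpr (h j hjk)⟩
  rcases j.eq_zero_or_pos with rfl | hj0
  · simp
  · exact (hHsym j hj).mp (h j hj0 hj)

open Garding in
theorem stmt_7_general (n k : ℕ) (hkn : k ≤ n) :
    IsOpen (GardingCone n k) ∧
    Convex ℝ (GardingCone n k) ∧
    (∀ κ ∈ GardingCone n k, ∀ c : ℝ, 0 < c → c • κ ∈ GardingCone n k) ∧
    (∀ σ : Equiv.Perm (Fin n), ∀ κ ∈ GardingCone n k, κ ∘ σ ∈ GardingCone n k) ∧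
    (∀ κ : Fin n → ℝ, (∀ i, 0 < κ i) → κ ∈ GardingCone n k) := by
  have hk : k ≤ Fintype.card (Fin n) := by simpa using hkn
  rw [gardingCone_eq_cone hkn]
  exact ⟨isOpen_cone, convex_cone hk, fun κ hκ c hc => smul_mem_cone hκ hc,
    fun σ κ hκ => comp_perm_mem_cone hκ σ, fun κ hκ => mem_cone_of_pos hk hκ⟩

/-- For `n ≥ 1` and `1 ≤ k ≤ n`, the Garding cone `Γ_k` is an open
convex cone: it is open, convex, closed under multiplication by positive scalars,
invariant under permutations of the coordinates, and contains the positive cone. -/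
theorem stmt_7 (n k : ℕ) (hn : 1 ≤ n) (hk1 : 1 ≤ k) (hkn : k ≤ n) :
    IsOpen (GardingCone n k) ∧
    Convex ℝ (GardingCone n k) ∧
    (∀ κ ∈ GardingCone n k, ∀ c : ℝ, 0 < c → c • κ ∈ GardingCone n k) ∧
    (∀ σ : Equiv.Perm (Fin n), ∀ κ ∈ GardingCone n k, κ ∘ σ ∈ GardingCone n k) ∧
    (∀ κ : Fin n → ℝ, (∀ i, 0 < κ i) → κ ∈ GardingCone n k) :=
  stmt_7_general n k hkn
end

section
/- For n ≥ 1 and 1 ≤ k ≤ n, the curvature quotient F(κ) = H_k(κ)/H_{k−1}(κ) is concave on the Garding cone Γ_k: for all κ, λ ∈ Γ_k and all t ∈ [0, 1], F(tκ + (1 − t)λ) ≥ t·F(κ) + (1 − t)·F(λ). Moreover F is positively homogeneous of degree 1 on Γ_k with F(1, …, 1) = 1. -/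
/-!
Write `σ_j` for the elementary symmetric functions of `x` over a finite index set `A` and
`q_k = σ_{k+1} / σ_k`. Up to a positive constant `F` is `q_{k-1}`, which is homogeneous of degree
one, so concavity on the cone amounts to superadditivity `q_k x + q_k y ≤ q_k (x + y)` together
with the cone `Γ_{k+1}` being closed under addition. Both are proved together by induction on `k`,
for all index sets at once. The step rests on
`σ₁ σ_{k+1} = (k + 2) σ_{k+2} + ∑ᵢ xᵢ² σ_k(A \ i)`, i.e. `q_{k+1} = (σ₁ - ∑ᵢ xᵢ² / φᵢ) / (k + 2)`
with `φᵢ = σ_{k+1}(A) / σ_k(A \ i) = xᵢ + q_k^{A \ i}`: `σ₁` is additive, every `φᵢ` is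
superadditive by induction, and `(a, φ) ↦ a² / φ` is subadditive.

That `φᵢ > 0`, i.e. that points of `Γ_{k+1}(A)` restrict to `Γ_k(A \ i)`, comes from Newton's
inequality `σ_k σ_{k+2} ≤ σ_{k+1}²`. Newton's inequality for the means `σ_j / C(m, j)` is proved
with Rolle's theorem: the roots of `(∏ (X - aᵢ))'` are real and have the same means, which reduces
to `m = j + 2`; there the products `∏_{b ≠ a} b` turn the indices `j, j + 1, j + 2` into
`0, 1, 2`, and the case `m = 2`, `j = 0` is `4ab ≤ (a + b)²`.
-/

namespace Multiset

section CommSemiring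

variable {R : Type*} [CommSemiring R]

@[simp]
theorem esymm_zero (s : Multiset R) : s.esymm 0 = 1 := by
  simp [esymm]

theorem esymm_cons_succ (a : R) (s : Multiset R) (k : ℕ) :
    (a ::ₘ s).esymm (k + 1) = s.esymm (k + 1) + a * s.esymm k := by
  simp only [esymm, powersetCard_cons, map_add, sum_add, map_map, Function.comp_def, prod_cons,
    sum_map_mul_left]

theorem esymm_eq_zero_of_card_lt {s : Multiset R} {k : ℕ} (h : card s < k) : s.esymm k = 0 := by
  simp [esymm, powersetCard_eq_empty _ h]

theorem esymm_card (s : Multiset R) : s.esymm (card s) = s.prod := by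
  induction s using Multiset.induction with
  | empty => simp
  | cons a s ih =>
    rw [card_cons, esymm_cons_succ, ih, esymm_eq_zero_of_card_lt (Nat.lt_succ_self _), prod_cons]
    ring

theorem esymm_one (s : Multiset R) : s.esymm 1 = s.sum := by
  induction s using Multiset.induction with
  | empty => exact esymm_eq_zero_of_card_lt (by simp)
  | cons a s ih => rw [sum_cons, esymm_cons_succ, ih, esymm_zero, mul_one, add_comm]

theorem esymm_map_mul_left (c : R) (s : Multiset R) (k : ℕ) :
    (s.map (c * ·)).esymm k = c ^ k * s.esymm k := by
  simpa using (pow_smul_esymm c k s).symm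

variable [DecidableEq R]

def prodErases (s : Multiset R) : Multiset R :=
  s.map fun a => (s.erase a).prod

@[simp]
theorem card_prodErases (s : Multiset R) : card s.prodErases = card s :=
  card_map _ _

theorem prodErases_cons (a : R) (s : Multiset R) :
    (a ::ₘ s).prodErases = s.prod ::ₘ s.prodErases.map (a * ·) := by
  rw [prodErases, map_cons, erase_cons_head, prodErases, map_map]
  congr 1
  refine map_congr rfl fun b hb => ?_
  rcases eq_or_ne b a with rfl | hba
  · rw [erase_cons_head, Function.comp_apply, ← prod_cons, cons_erase hb]
  · rw [erase_cons_tail_of_mem hb, prod_cons, Function.comp_apply]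

theorem esymm_eq_sum_prodErases {s : Multiset R} {j : ℕ} (hs : card s = j + 1) :
    s.esymm j = s.prodErases.sum := by
  induction s using Multiset.induction generalizing j with
  | empty => simp at hs
  | cons a u ih =>
    rw [card_cons, Nat.add_right_cancel_iff] at hs
    rw [prodErases_cons, sum_cons, sum_map_mul_left, map_id']
    cases j with
    | zero => simp [card_eq_zero.mp hs, prodErases]
    | succ j => rw [esymm_cons_succ, ← hs, esymm_card, ih hs]

theorem esymm_mul_prod_eq_esymm_two_prodErases {s : Multiset R} {j : ℕ} (hs : card s = j + 2) :
    s.esymm j * s.prod = s.prodErases.esymm 2 := by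
  induction s using Multiset.induction generalizing j with
  | empty => simp at hs
  | cons a u ih =>
    rw [card_cons, Nat.add_right_cancel_iff] at hs
    rw [prodErases_cons, esymm_cons_succ, esymm_map_mul_left, esymm_one, prod_cons]
    cases j with
    | zero =>
      obtain ⟨b, rfl⟩ := card_eq_one.mp hs
      simp only [prodErases, map_singleton, erase_singleton, prod_zero, prod_singleton,
        sum_singleton, esymm_zero, esymm_eq_zero_of_card_lt (by simp : card ({1} : Multiset R) < 2)]
      ring
    | succ j =>
      rw [esymm_cons_succ, ← ih hs, sum_map_mul_left, map_id', ← esymm_eq_sum_prodErases hs]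
      ring

end CommSemiring

open Polynomial in
theorem _root_.Polynomial.card_roots_derivative {p : ℝ[X]} (hp : card p.roots = p.natDegree) :
    card (derivative p).roots = (derivative p).natDegree := by
  have := p.card_roots_le_derivative
  have := card_roots' (derivative p)
  have := natDegree_derivative_le p
  omega

/-- The paper's `H_j`, for a multiset. -/
noncomputable def esymmMean (s : Multiset ℝ) (j : ℕ) : ℝ :=
  s.esymm j / (card s).choose j

open Polynomial in
theorem exists_card_eq_esymmMean_eq {s : Multiset ℝ} {m : ℕ} (hs : card s = m + 1) :
    ∃ t : Multiset ℝ, card t = m ∧ ∀ j ≤ m, t.esymmMean j = s.esymmMean j := by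
  set p : ℝ[X] := (s.map fun a => X - C a).prod
  have hp_roots : p.roots = s := roots_multiset_prod_X_sub_C s
  have hp_deg : p.natDegree = m + 1 := by
    rw [natDegree_multiset_prod_X_sub_C_eq_card, hs]
  have hp_monic : p.Monic := monic_multiset_prod_of_monic _ _ fun a _ => monic_X_sub_C a
  have hq_deg : (derivative p).natDegree = m := by rw [natDegree_derivative, hp_deg]; rfl
  have hq_roots : card (derivative p).roots = (derivative p).natDegree :=
    card_roots_derivative (by rw [hp_roots, hp_deg, hs])
  have hq_lead : (derivative p).leadingCoeff = m + 1 := by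
    rw [leadingCoeff, hq_deg, coeff_derivative, ← hp_deg, hp_monic.coeff_natDegree, one_mul]
  refine ⟨(derivative p).roots, hq_roots.trans hq_deg, fun j hj => ?_⟩
  have hq := coeff_eq_esymm_roots_of_card hq_roots (k := m - j) (by omega)
  have hp := coeff_eq_esymm_roots_of_card (p := p) (by rw [hp_roots, hp_deg, hs])
    (k := m - j + 1) (by omega)
  rw [coeff_derivative, hp, hq_lead, hq_deg, hp_deg, hp_monic.leadingCoeff, hp_roots,
    show m + 1 - (m - j + 1) = j by omega, show m - (m - j) = j by omega] at hq
  have hchoose : (m.choose j : ℝ) * (m + 1) = ((m + 1).choose j) * (m + 1 - j) := by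
    have h := congrArg (Nat.cast : ℕ → ℝ) (Nat.choose_mul_succ_eq m j)
    push_cast [Nat.cast_sub (show j ≤ m + 1 by omega)] at h
    exact h
  have hcm : (m.choose j : ℝ) ≠ 0 := by exact_mod_cast (Nat.choose_pos hj).ne'
  have hcm1 : ((m + 1).choose j : ℝ) ≠ 0 := by exact_mod_cast (Nat.choose_pos (by omega)).ne'
  have key : (m + 1 : ℝ) * (derivative p).roots.esymm j = (m + 1 - j) * s.esymm j := by
    push_cast [Nat.cast_sub hj] at hq
    refine mul_left_cancel₀ (pow_ne_zero j (by norm_num : (-1 : ℝ) ≠ 0)) ?_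
    linear_combination -hq
  rw [esymmMean, esymmMean, hq_roots, hq_deg, hs, div_eq_div_iff hcm hcm1]
  refine mul_left_cancel₀ (by positivity : (m + 1 : ℝ) ≠ 0) ?_
  linear_combination ((m + 1).choose j : ℝ) * key - s.esymm j * hchoose

theorem esymmMean_mul_le_sq_of_forall_card_eq {j : ℕ}
    (h : ∀ t : Multiset ℝ, card t = j + 2 →
      t.esymmMean j * t.esymmMean (j + 2) ≤ t.esymmMean (j + 1) ^ 2)
    {s : Multiset ℝ} (hs : j + 2 ≤ card s) :
    s.esymmMean j * s.esymmMean (j + 2) ≤ s.esymmMean (j + 1) ^ 2 := by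
  obtain ⟨d, hd⟩ := Nat.exists_eq_add_of_le hs
  induction d generalizing s with
  | zero => exact h s hd
  | succ d ih =>
    obtain ⟨t, ht, heq⟩ := exists_card_eq_esymmMean_eq (m := j + 2 + d) hd
    rw [← heq j (by omega), ← heq (j + 1) (by omega), ← heq (j + 2) (by omega)]
    exact ih (by omega) ht

theorem esymmMean_two_le_sq {s : Multiset ℝ} (hs : 2 ≤ card s) :
    s.esymmMean 2 ≤ s.esymmMean 1 ^ 2 := by
  have hpair : ∀ t : Multiset ℝ, card t = 2 →
      t.esymmMean 0 * t.esymmMean 2 ≤ t.esymmMean 1 ^ 2 := by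
    intro t ht
    obtain ⟨a, b, rfl⟩ := card_eq_two.mp ht
    simp only [esymmMean, insert_eq_cons, esymm_zero, esymm_pair_one, esymm_pair_two, card_cons,
      card_singleton]
    norm_num
    nlinarith [sq_nonneg (a - b)]
  simpa only [esymmMean, esymm_zero, Nat.choose_zero_right, Nat.cast_one, div_one, one_mul] using esymmMean_mul_le_sq_of_forall_card_eq hpair hs

/-- **Newton's inequality.** -/
theorem esymmMean_mul_le_sq {s : Multiset ℝ} {j : ℕ} (hs : j + 2 ≤ card s) :
    s.esymmMean j * s.esymmMean (j + 2) ≤ s.esymmMean (j + 1) ^ 2 := by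
  refine esymmMean_mul_le_sq_of_forall_card_eq (fun t ht => ?_) hs
  have h₀ : t.esymmMean j * t.esymmMean (j + 2) = t.prodErases.esymmMean 2 := by
    rw [esymmMean, esymmMean, esymmMean, ← esymm_mul_prod_eq_esymm_two_prodErases ht, ← ht,
      esymm_card, Nat.choose_self, card_prodErases, ht, Nat.choose_symm_add]
    ring
  have h₁ : t.esymmMean (j + 1) = t.prodErases.esymmMean 1 := by
    rw [esymmMean, esymmMean, esymm_one, ← esymm_eq_sum_prodErases ht, card_prodErases, ht,
      Nat.choose_succ_self_right, Nat.choose_one_right]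
  rw [h₀, h₁]
  exact esymmMean_two_le_sq (by simp [ht])

theorem _root_.Nat.choose_mul_choose_add_two_le_sq (m j : ℕ) :
    m.choose j * m.choose (j + 2) ≤ m.choose (j + 1) ^ 2 := by
  rcases lt_or_ge m (j + 2) with h | h
  · simp [Nat.choose_eq_zero_of_lt h]
  have h₁ := Nat.choose_succ_right_eq m j
  have h₂ := Nat.choose_succ_right_eq m (j + 1)
  refine Nat.le_of_mul_le_mul_right (c := (m - j) * (j + 2)) ?_ (Nat.mul_pos (by omega) (by omega))
  calc m.choose j * m.choose (j + 2) * ((m - j) * (j + 2))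
      = m.choose (j + 1) ^ 2 * ((j + 1) * (m - (j + 1))) := by
        rw [mul_mul_mul_comm, ← h₁, h₂]
        ring
    _ ≤ m.choose (j + 1) ^ 2 * ((m - j) * (j + 2)) := by
        rw [mul_comm (m - j)]
        exact Nat.mul_le_mul_left _ (Nat.mul_le_mul (by omega) (by omega))

theorem esymm_mul_esymm_le_sq (s : Multiset ℝ) (j : ℕ) :
    s.esymm j * s.esymm (j + 2) ≤ s.esymm (j + 1) ^ 2 := by
  rcases lt_or_ge (card s) (j + 2) with h | h
  · rw [esymm_eq_zero_of_card_lt h, mul_zero]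
    positivity
  set c : ℕ → ℝ := fun i => ((card s).choose i : ℝ) with hc_def
  have hc : ∀ i ≤ card s, s.esymm i = c i * s.esymmMean i := fun i hi =>
    (mul_div_cancel₀ _ (by simpa [hc_def] using (Nat.choose_pos hi).ne')).symm
  have hc_sq : c j * c (j + 2) ≤ c (j + 1) ^ 2 := by
    simp only [hc_def]
    exact_mod_cast Nat.choose_mul_choose_add_two_le_sq (card s) j
  rw [hc j (by omega), hc (j + 1) (by omega), hc (j + 2) h]
  calc c j * s.esymmMean j * (c (j + 2) * s.esymmMean (j + 2))
      = c j * c (j + 2) * (s.esymmMean j * s.esymmMean (j + 2)) := by ring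
    _ ≤ c j * c (j + 2) * s.esymmMean (j + 1) ^ 2 := by
        gcongr
        exact esymmMean_mul_le_sq h
    _ ≤ c (j + 1) ^ 2 * s.esymmMean (j + 1) ^ 2 := by gcongr
    _ = (c (j + 1) * s.esymmMean (j + 1)) ^ 2 := by ring

end Multiset

open Finset

section esymmOn

variable {ι R : Type*} [CommRing R]

def esymmOn (A : Finset ι) (j : ℕ) (x : ι → R) : R :=
  ∑ s ∈ A.powersetCard j, ∏ i ∈ s, x i

theorem esymmOn_eq_esymm (A : Finset ι) (j : ℕ) (x : ι → R) :
    esymmOn A j x = (A.val.map x).esymm j :=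
  (Finset.esymm_map_val x A j).symm

@[simp]
theorem esymmOn_zero (A : Finset ι) (x : ι → R) : esymmOn A 0 x = 1 := by
  simp [esymmOn]

theorem esymmOn_one (A : Finset ι) (x : ι → R) : esymmOn A 1 x = ∑ i ∈ A, x i := by
  simp [esymmOn, powersetCard_one]

theorem esymmOn_one_add (A : Finset ι) (x y : ι → R) :
    esymmOn A 1 (x + y) = esymmOn A 1 x + esymmOn A 1 y := by
  simp [esymmOn_one, sum_add_distrib]

theorem esymmOn_of_card_lt {A : Finset ι} {j : ℕ} (h : #A < j) (x : ι → R) :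
    esymmOn A j x = 0 := by
  simp [esymmOn, powersetCard_eq_empty.mpr h]

theorem esymmOn_smul (A : Finset ι) (j : ℕ) (c : R) (x : ι → R) :
    esymmOn A j (c • x) = c ^ j * esymmOn A j x := by
  rw [esymmOn_eq_esymm, esymmOn_eq_esymm, ← Multiset.esymm_map_mul_left, Multiset.map_map]
  rfl

variable [DecidableEq ι]

theorem esymmOn_insert {a : ι} {A : Finset ι} (h : a ∉ A) (j : ℕ) (x : ι → R) :
    esymmOn (insert a A) (j + 1) x = esymmOn A (j + 1) x + x a * esymmOn A j x := by
  simp only [esymmOn_eq_esymm, insert_val_of_notMem h, Multiset.map_cons,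
    Multiset.esymm_cons_succ]

theorem esymmOn_erase {i : ι} {A : Finset ι} (h : i ∈ A) (j : ℕ) (x : ι → R) :
    esymmOn A (j + 1) x = esymmOn (A.erase i) (j + 1) x + x i * esymmOn (A.erase i) j x := by
  rw [← esymmOn_insert (notMem_erase i A), insert_erase h]

theorem sum_mul_esymmOn_erase (A : Finset ι) (j : ℕ) (x : ι → R) :
    ∑ i ∈ A, x i * esymmOn (A.erase i) j x = (j + 1) * esymmOn A (j + 1) x := by
  induction A using Finset.induction_on generalizing j with
  | empty => simp [esymmOn_of_card_lt (by simp : #(∅ : Finset ι) < j + 1)]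
  | insert a B ha ih =>
    rw [sum_insert ha, erase_insert ha]
    cases j with
    | zero => simp [esymmOn_one, sum_insert ha]
    | succ j =>
      have hstep : ∀ i ∈ B, x i * esymmOn ((insert a B).erase i) (j + 1) x
          = x i * esymmOn (B.erase i) (j + 1) x + x a * (x i * esymmOn (B.erase i) j x) := by
        intro i hi
        rw [erase_insert_of_ne (by rintro rfl; exact ha hi),
          esymmOn_insert (fun h => ha (mem_of_mem_erase h))]
        ring
      rw [sum_congr rfl hstep, sum_add_distrib, ← mul_sum, ih, ih, esymmOn_insert ha]
      push_cast
      ring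

theorem esymmOn_one_mul (A : Finset ι) (j : ℕ) (x : ι → R) :
    esymmOn A 1 x * esymmOn A (j + 1) x
      = (j + 2) * esymmOn A (j + 2) x + ∑ i ∈ A, x i ^ 2 * esymmOn (A.erase i) j x := by
  have hsplit : ∀ i ∈ A, x i * esymmOn A (j + 1) x
      = x i * esymmOn (A.erase i) (j + 1) x + x i ^ 2 * esymmOn (A.erase i) j x := by
    intro i hi
    rw [esymmOn_erase hi]
    ring
  rw [esymmOn_one, sum_mul, sum_congr rfl hsplit, sum_add_distrib, sum_mul_esymmOn_erase]
  push_cast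
  ring

end esymmOn

theorem esymmOn_mul_esymmOn_le_sq {ι : Type*} (A : Finset ι) (j : ℕ) (x : ι → ℝ) :
    esymmOn A j x * esymmOn A (j + 2) x ≤ esymmOn A (j + 1) x ^ 2 := by
  simpa only [esymmOn_eq_esymm] using Multiset.esymm_mul_esymm_le_sq (A.val.map x) j

theorem pos_of_mul_le_sq {a b c t : ℝ} (ha : 0 < a) (h₁ : 0 < b + t * a) (h₂ : 0 < c + t * b)
    (hN : a * c ≤ b ^ 2) : 0 < b := by
  by_contra! hb
  have ht : 0 < t := by nlinarith
  have hc : 0 < c := by nlinarith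
  nlinarith [mul_pos h₁ hc, mul_nonneg h₂.le (neg_nonneg.mpr hb),
    mul_nonneg ht.le (sub_nonneg.mpr hN)]

theorem add_sq_div_le_of_add_le {a b α β γ : ℝ} (hα : 0 < α) (hβ : 0 < β) (hγ : α + β ≤ γ) :
    (a + b) ^ 2 / γ ≤ a ^ 2 / α + b ^ 2 / β := by
  calc (a + b) ^ 2 / γ ≤ (a + b) ^ 2 / (α + β) := by gcongr
    _ ≤ a ^ 2 / α + b ^ 2 / β := by
      rw [div_add_div _ _ hα.ne' hβ.ne', div_le_div_iff₀ (by positivity) (by positivity)]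
      nlinarith [sq_nonneg (a * β - b * α), mul_pos hα hβ]

section GardingCone

variable {ι : Type*}

def gardingConeOn (A : Finset ι) (k : ℕ) : Set (ι → ℝ) :=
  {x | ∀ j, 1 ≤ j → j ≤ k → 0 < esymmOn A j x}

noncomputable def esymmQuot (A : Finset ι) (k : ℕ) (x : ι → ℝ) : ℝ :=
  esymmOn A (k + 1) x / esymmOn A k x

variable {A : Finset ι} {k : ℕ} {x y : ι → ℝ}

theorem gardingConeOn_anti {k' : ℕ} (h : k' ≤ k) : gardingConeOn A k ⊆ gardingConeOn A k' :=
  fun _ hx j hj₁ hj₂ => hx j hj₁ (hj₂.trans h)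

theorem esymmOn_pos_of_mem_gardingConeOn (hx : x ∈ gardingConeOn A k) : 0 < esymmOn A k x := by
  rcases k.eq_zero_or_pos with rfl | hk
  · simp
  · exact hx k hk le_rfl

theorem smul_mem_gardingConeOn {c : ℝ} (hc : 0 < c) (hx : x ∈ gardingConeOn A k) :
    c • x ∈ gardingConeOn A k := fun j hj₁ hj₂ => by
  rw [esymmOn_smul]
  exact mul_pos (pow_pos hc j) (hx j hj₁ hj₂)

theorem add_mem_gardingConeOn_succ (hx : x ∈ gardingConeOn A (k + 1))
    (hy : y ∈ gardingConeOn A (k + 1)) (hxy : x + y ∈ gardingConeOn A k)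
    (hq : esymmQuot A k x + esymmQuot A k y ≤ esymmQuot A k (x + y)) :
    x + y ∈ gardingConeOn A (k + 1) := by
  intro j hj₁ hj₂
  rcases hj₂.lt_or_eq with hj | rfl
  · exact hxy j hj₁ (by omega)
  have hqx : 0 < esymmQuot A k x := div_pos (hx _ hj₁ le_rfl) (esymmOn_pos_of_mem_gardingConeOn
    (gardingConeOn_anti k.le_succ hx))
  have hqy : 0 < esymmQuot A k y := div_pos (hy _ hj₁ le_rfl) (esymmOn_pos_of_mem_gardingConeOn
    (gardingConeOn_anti k.le_succ hy))
  have hxy_pos := esymmOn_pos_of_mem_gardingConeOn hxy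
  have := mul_pos ((add_pos hqx hqy).trans_le hq) hxy_pos
  rwa [esymmQuot, div_mul_cancel₀ _ hxy_pos.ne'] at this

variable [DecidableEq ι]

theorem mem_gardingConeOn_erase {i : ι} (hi : i ∈ A) :
    ∀ {k : ℕ}, x ∈ gardingConeOn A (k + 1) → x ∈ gardingConeOn (A.erase i) k
  | 0, _ => fun _ h₁ h₂ => absurd h₁ (by omega)
  | k + 1, hx => by
    have ih : x ∈ gardingConeOn (A.erase i) k :=
      mem_gardingConeOn_erase hi (gardingConeOn_anti (by omega) hx)
    intro j hj₁ hj₂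
    rcases hj₂.lt_or_eq with hj | rfl
    · exact ih j hj₁ (by omega)
    refine pos_of_mul_le_sq (t := x i) (esymmOn_pos_of_mem_gardingConeOn ih) ?_ ?_
      (esymmOn_mul_esymmOn_le_sq _ _ _)
    · rw [← esymmOn_erase hi]; exact hx (k + 1) (by omega) (by omega)
    · rw [← esymmOn_erase hi]; exact hx (k + 2) (by omega) le_rfl

theorem div_esymmOn_erase_eq {i : ι} (hi : i ∈ A) {w : ι → ℝ} (h : esymmOn (A.erase i) k w ≠ 0) :
    esymmOn A (k + 1) w / esymmOn (A.erase i) k w = w i + esymmQuot (A.erase i) k w := by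
  rw [esymmOn_erase hi, add_div, mul_div_cancel_right₀ _ h, esymmQuot, add_comm]

theorem esymmQuot_succ_eq {w : ι → ℝ} (h : esymmOn A (k + 1) w ≠ 0) :
    esymmQuot A (k + 1) w = (esymmOn A 1 w
      - ∑ i ∈ A, w i ^ 2 / (esymmOn A (k + 1) w / esymmOn (A.erase i) k w)) / (k + 2) := by
  have key := esymmOn_one_mul A k w
  simp_rw [div_div_eq_mul_div, ← sum_div]
  rw [esymmQuot, eq_div_iff (by positivity), div_mul_eq_mul_div, div_eq_iff h, sub_mul,
    div_mul_cancel₀ _ h]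
  linear_combination -key

theorem esymmQuot_add_le_succ (hx : x ∈ gardingConeOn A (k + 2))
    (hy : y ∈ gardingConeOn A (k + 2)) (hxy : x + y ∈ gardingConeOn A (k + 1))
    (hxy_erase : ∀ i ∈ A, x + y ∈ gardingConeOn (A.erase i) (k + 1))
    (hq : ∀ i ∈ A, esymmQuot (A.erase i) k x + esymmQuot (A.erase i) k y
      ≤ esymmQuot (A.erase i) k (x + y)) :
    esymmQuot A (k + 1) x + esymmQuot A (k + 1) y ≤ esymmQuot A (k + 1) (x + y) := by
  set φ : ι → (ι → ℝ) → ℝ := fun i w => esymmOn A (k + 1) w / esymmOn (A.erase i) k w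
  have hS : ∀ i ∈ A, ∀ w ∈ gardingConeOn A (k + 2), 0 < esymmOn (A.erase i) k w :=
    fun i hi w hw => esymmOn_pos_of_mem_gardingConeOn
      (gardingConeOn_anti k.le_succ (mem_gardingConeOn_erase hi hw))
  have hφ_pos : ∀ i ∈ A, ∀ w ∈ gardingConeOn A (k + 2), 0 < φ i w :=
    fun i hi w hw => div_pos (hw (k + 1) (by omega) (by omega)) (hS i hi w hw)
  have hφ_add : ∀ i ∈ A, φ i x + φ i y ≤ φ i (x + y) := by
    intro i hi
    have hSxy := esymmOn_pos_of_mem_gardingConeOn (gardingConeOn_anti k.le_succ (hxy_erase i hi))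
    simp only [φ, div_esymmOn_erase_eq hi (hS i hi x hx).ne', div_esymmOn_erase_eq hi
      (hS i hi y hy).ne', div_esymmOn_erase_eq hi hSxy.ne', Pi.add_apply]
    linarith [hq i hi]
  have hsum : ∑ i ∈ A, (x + y) i ^ 2 / φ i (x + y)
      ≤ ∑ i ∈ A, x i ^ 2 / φ i x + ∑ i ∈ A, y i ^ 2 / φ i y := by
    rw [← sum_add_distrib]
    exact sum_le_sum fun i hi =>
      add_sq_div_le_of_add_le (hφ_pos i hi x hx) (hφ_pos i hi y hy) (hφ_add i hi)
  rw [esymmQuot_succ_eq (hx (k + 1) (by omega) (by omega)).ne',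
    esymmQuot_succ_eq (hy (k + 1) (by omega) (by omega)).ne',
    esymmQuot_succ_eq (hxy (k + 1) (by omega) le_rfl).ne', esymmOn_one_add, ← add_div]
  gcongr
  simp only [φ] at hsum
  linarith

theorem esymmQuot_add_le_and_add_mem :
    ∀ (k : ℕ) (A : Finset ι) {x y : ι → ℝ}, x ∈ gardingConeOn A (k + 1) →
      y ∈ gardingConeOn A (k + 1) →
      esymmQuot A k x + esymmQuot A k y ≤ esymmQuot A k (x + y) ∧
        x + y ∈ gardingConeOn A (k + 1)
  | 0, A, x, y, hx, hy => by
    have hq : esymmQuot A 0 x + esymmQuot A 0 y ≤ esymmQuot A 0 (x + y) := by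
      simp [esymmQuot, esymmOn_one_add]
    exact ⟨hq, add_mem_gardingConeOn_succ hx hy (fun _ h₁ h₂ => absurd h₁ (by omega)) hq⟩
  | k + 1, A, x, y, hx, hy => by
    have hxy := (esymmQuot_add_le_and_add_mem k A (gardingConeOn_anti (by omega) hx)
      (gardingConeOn_anti (by omega) hy)).2
    have herase := fun i (hi : i ∈ A) => esymmQuot_add_le_and_add_mem k (A.erase i)
      (mem_gardingConeOn_erase hi hx) (mem_gardingConeOn_erase hi hy)
    have hq := esymmQuot_add_le_succ hx hy hxy (fun i hi => (herase i hi).2)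
      (fun i hi => (herase i hi).1)
    exact ⟨hq, add_mem_gardingConeOn_succ hx hy hxy hq⟩

end GardingCone

theorem concaveOn_of_superadditive_of_homogeneous {E : Type*} [AddCommGroup E] [Module ℝ E]
    {s : Set E} {f : E → ℝ} (hs_add : ∀ x ∈ s, ∀ y ∈ s, x + y ∈ s)
    (hs_smul : ∀ x ∈ s, ∀ t : ℝ, 0 < t → t • x ∈ s)
    (hf_add : ∀ x ∈ s, ∀ y ∈ s, f x + f y ≤ f (x + y))
    (hf_smul : ∀ x ∈ s, ∀ t : ℝ, 0 < t → f (t • x) = t * f x) :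
    ConcaveOn ℝ s f := by
  refine concaveOn_iff_forall_pos.mpr ⟨convex_iff_forall_pos.mpr ?_, ?_⟩
  · intro x hx y hy a b ha hb _
    exact hs_add _ (hs_smul x hx a ha) _ (hs_smul y hy b hb)
  · intro x hx y hy a b ha hb _
    rw [smul_eq_mul, smul_eq_mul, ← hf_smul x hx a ha, ← hf_smul y hy b hb]
    exact hf_add _ (hs_smul x hx a ha) _ (hs_smul y hy b hb)

theorem hsym_eq_esymmOn (n j : ℕ) (κ : Fin n → ℝ) :
    Hsym n j κ = ((n.choose j : ℝ))⁻¹ * esymmOn univ j κ :=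
  rfl

theorem gardingCone_eq_gardingConeOn {n k : ℕ} (hk : k ≤ n) : GardingCone n k = gardingConeOn univ k := by
  ext κ
  refine forall_congr' fun j => imp_congr_right fun _ => imp_congr_right fun hj => ?_
  rw [hsym_eq_esymmOn, mul_pos_iff_of_pos_left]
  exact inv_pos.mpr (by exact_mod_cast Nat.choose_pos (hj.trans hk))

theorem hsym_smul (n j : ℕ) (t : ℝ) (κ : Fin n → ℝ) :
    Hsym n j (t • κ) = t ^ j * Hsym n j κ := by
  rw [hsym_eq_esymmOn, hsym_eq_esymmOn, esymmOn_smul]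
  ring

theorem hsym_one {n j : ℕ} (hj : j ≤ n) : Hsym n j (fun _ => 1) = 1 := by
  rw [Hsym]
  simp only [prod_const_one, sum_const, card_powersetCard, card_univ, Fintype.card_fin,
    nsmul_eq_mul, mul_one]
  exact inv_mul_cancel₀ (by exact_mod_cast (Nat.choose_pos hj).ne')

theorem hsym_succ_div_hsym (n k : ℕ) (κ : Fin n → ℝ) :
    Hsym n (k + 1) κ / Hsym n k κ
      = (n.choose k / n.choose (k + 1) : ℝ) * esymmQuot univ k κ := by
  simp only [hsym_eq_esymmOn, esymmQuot, div_eq_mul_inv, mul_inv, inv_inv]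
  ring

theorem Hsym_succ_div_hsym_smul (n k : ℕ) (κ : Fin n → ℝ) {t : ℝ} (ht : t ≠ 0) :
    Hsym n (k + 1) (t • κ) / Hsym n k (t • κ) = t * (Hsym n (k + 1) κ / Hsym n k κ) := by
  rw [hsym_smul, hsym_smul, pow_succ, mul_assoc,
    mul_div_mul_left _ _ (pow_ne_zero k ht), mul_div_assoc]

theorem stmt_9_general (n k : ℕ) (hk1 : 1 ≤ k) (hkn : k ≤ n)
    (F : (Fin n → ℝ) → ℝ) (hF : F = fun κ => Hsym n k κ / Hsym n (k - 1) κ) :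
    ConcaveOn ℝ (GardingCone n k) F ∧
    (∀ κ ∈ GardingCone n k, ∀ t : ℝ, 0 < t → F (t • κ) = t * F κ) ∧
    F (fun _ => 1) = 1 := by
  obtain ⟨k, rfl⟩ : ∃ m, k = m + 1 := ⟨k - 1, by omega⟩
  rw [Nat.add_sub_cancel] at hF
  subst hF
  have hhom : ∀ κ ∈ GardingCone n (k + 1), ∀ t : ℝ, 0 < t →
      Hsym n (k + 1) (t • κ) / Hsym n k (t • κ) = t * (Hsym n (k + 1) κ / Hsym n k κ) :=
    fun κ _ t ht => Hsym_succ_div_hsym_smul n k κ ht.ne'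
  rw [gardingCone_eq_gardingConeOn hkn] at hhom ⊢
  refine ⟨concaveOn_of_superadditive_of_homogeneous
    (fun x hx y hy => (esymmQuot_add_le_and_add_mem k univ hx hy).2)
    (fun x hx t ht => smul_mem_gardingConeOn ht hx) (fun x hx y hy => ?_) hhom, hhom, ?_⟩
  · simp only [hsym_succ_div_hsym, ← mul_add]
    exact mul_le_mul_of_nonneg_left (esymmQuot_add_le_and_add_mem k univ hx hy).1
      (by positivity)
  · simp only [hsym_one hkn, hsym_one (k.le_succ.trans hkn), div_one]

/-- For `1 ≤ k ≤ n`, the quotient `F = H_k / H_{k-1}` is concave on the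
Garding cone `Γ_k`, positively homogeneous of degree one there, and normalized by
`F(1, …, 1) = 1`. -/
theorem stmt_9 (n k : ℕ) (hn : 1 ≤ n) (hk1 : 1 ≤ k) (hkn : k ≤ n)
    (F : (Fin n → ℝ) → ℝ) (hF : F = fun κ => Hsym n k κ / Hsym n (k - 1) κ) :
    ConcaveOn ℝ (GardingCone n k) F ∧
    (∀ κ ∈ GardingCone n k, ∀ t : ℝ, 0 < t → F (t • κ) = t * F κ) ∧
    F (fun _ => 1) = 1 :=
  stmt_9_general n k hk1 hkn F hF
end
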